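/- Let Δ_f be a finite irreducible root system, α_p a long simple root, and Σ a connected component of the Dynkin diagram of Π_f \ {α_p} with highest root θ_Σ. If α_p is connected to exactly one root α_{j(Σ)} of Σ, then (α_p^∨, θ_Σ) = -1, and the coefficient of α_{j(Σ)} in θ_Σ equals 1. -/
import Mathlib


open scoped RealInnerProductSpace

/-- The coroot `α^∨ = 2α/(α,α)` of a vector `α` in a real inner product space. -/
noncomputable def coroot {V : Type*} [NormedAddCommGroup V] [InnerProductSpace ℝ V] (α : V) : V :=
  (2 / ⟪α, α⟫) • α

/-- A finite crystallographic root system spanning the space. -/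
def IsCrystalRootSystem {V : Type*} [NormedAddCommGroup V] [InnerProductSpace ℝ V]
    (Δ : Set V) : Prop :=
  Δ.Finite ∧ (0 : V) ∉ Δ ∧ Submodule.span ℝ Δ = ⊤ ∧ (∀ α ∈ Δ, -α ∈ Δ) ∧
  (∀ α ∈ Δ, ∀ β ∈ Δ, ∃ n : ℤ, ⟪coroot α, β⟫ = (n : ℝ)) ∧
  (∀ α ∈ Δ, ∀ β ∈ Δ, β - ⟪coroot α, β⟫ • α ∈ Δ)

/-- Irreducibility: no nontrivial orthogonal decomposition. -/
def IsIrreducibleRS {V : Type*} [NormedAddCommGroup V] [InnerProductSpace ℝ V]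
    (Δ : Set V) : Prop :=
  ∀ Δ₁ Δ₂ : Set V, Δ = Δ₁ ∪ Δ₂ → (∀ α ∈ Δ₁, ∀ β ∈ Δ₂, ⟪α, β⟫ = 0) → Δ₁ = ∅ ∨ Δ₂ = ∅

/-- The set of reflections `s_α` for roots `α ∈ Δ`. -/
def weylReflections {V : Type*} [NormedAddCommGroup V] [InnerProductSpace ℝ V]
    (Δ : Set V) : Set (V ≃ₗ[ℝ] V) :=
  {s | ∃ α ∈ Δ, ∀ x, s x = x - ⟪coroot α, x⟫ • α}
/-- let `α p` be a long simple root and `Σ` (with simple roots `{α i | i ∈ S}`) a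
connected component of the remaining diagram, with highest root `θS = Σ_{i∈S} c i • α i`.
If `α p` is connected to exactly one root `α j` of `Σ`, then `(α p^∨, θS) = -1` and the
coefficient of `α j` in `θS` is `1`. -/
theorem stmt9 {V : Type*} [NormedAddCommGroup V] [InnerProductSpace ℝ V]
    (Δ : Set V) (hΔ : IsCrystalRootSystem Δ) (hirr : IsIrreducibleRS Δ)
    {n : ℕ} (α : Fin n → V) (hα : ∀ i, α i ∈ Δ) (hind : LinearIndependent ℝ α)
    -- every root is a nonnegative or nonpositive integer combination of the simple roots
    (hsimple : ∀ β ∈ Δ, ∃ c : Fin n → ℤ, ((∀ i, 0 ≤ c i) ∨ (∀ i, c i ≤ 0)) ∧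
      β = ∑ i, (c i : ℝ) • α i)
    (p : Fin n)
    -- α p is a long root
    (hlong : ∀ β ∈ Δ, ⟪β, β⟫ ≤ ⟪α p, α p⟫)
    (S : Finset (Fin n)) (hpS : p ∉ S)
    (θS : V) (hθS : θS ∈ Δ) (c : Fin n → ℕ) (hc : θS = ∑ i ∈ S, (c i : ℝ) • α i)
    -- θS has full support on S (Σ is connected)
    (hsupp : ∀ i ∈ S, c i ≠ 0)
    -- θS is the highest root of the subsystem generated by {α i | i ∈ S}
    (hhigh : ∀ β ∈ Δ, β ∈ Submodule.span ℝ (α '' S) →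
      ∃ d : Fin n → ℝ, (∀ i, 0 ≤ d i) ∧ θS - β = ∑ i ∈ S, d i • α i)
    -- α p is connected to exactly one simple root α j of Σ
    (j : Fin n) (hj : j ∈ S) (hconn : ⟪α p, α j⟫ ≠ 0)
    (honly : ∀ i ∈ S, i ≠ j → ⟪α p, α i⟫ = 0) :
    ⟪coroot (α p), θS⟫ = -1 ∧ c j = 1 := by
  obtain ⟨hfin, h0, hspan, hnegm, hcrys, hrefl⟩ := hΔ
  have hli := Fintype.linearIndependent_iff.mp hind
  have hpne : α p ≠ 0 := fun h => h0 (h ▸ hα p)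
  have hpp : (0:ℝ) < ⟪α p, α p⟫ := by
    rcases (real_inner_self_nonneg (x := α p)).lt_or_eq with h | h
    · exact h
    · exact absurd (inner_self_eq_zero.mp h.symm) hpne
  have hjp : j ≠ p := fun h => hpS (h ▸ hj)
  have hcoroot : ∀ x : V, ⟪coroot (α p), x⟫ = (2 / ⟪α p, α p⟫) * ⟪α p, x⟫ := by
    intro x; simp [coroot, real_inner_smul_left]
  -- N := pairing with α j
  obtain ⟨N, hN⟩ := hcrys (α p) (hα p) (α j) (hα j)
  have hNne : (N:ℝ) ≠ 0 := by
    rw [← hN, hcoroot]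
    exact mul_ne_zero (div_ne_zero two_ne_zero hpp.ne') hconn
  have hNle : N ≤ 0 := by
    by_contra hpos
    push_neg at hpos
    have hmem := hrefl (α p) (hα p) (α j) (hα j)
    rw [hN] at hmem
    obtain ⟨d, hd, heq⟩ := hsimple _ hmem
    set e : Fin n → ℝ := fun i => if i = j then 1 else if i = p then -(N:ℝ) else 0 with he
    have hsum : ∑ i, e i • α i = α j - (N:ℝ) • α p := by
      have h1 : ∀ i, e i • α i
          = (if i = j then α j else 0) + (if i = p then (-(N:ℝ)) • α p else 0) := by
        intro i
        by_cases h1 : i = j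
        · subst h1
          simp [he, hjp]
        · by_cases h2 : i = p
          · subst h2
            simp [he, h1, Ne.symm hjp]
          · simp [he, h1, h2]
      rw [Finset.sum_congr rfl (fun i _ => h1 i), Finset.sum_add_distrib]
      simp [sub_eq_add_neg, neg_smul]
    have hz : ∀ i, (d i : ℝ) - e i = 0 := by
      apply hli
      rw [Finset.sum_congr rfl (fun i _ => sub_smul (d i : ℝ) (e i) (α i)),
        Finset.sum_sub_distrib, hsum, ← heq, sub_self]
    have hdj : (d j : ℝ) = 1 := by have := hz j; simp [he] at this; linarith
    have hdp : (d p : ℝ) = -(N:ℝ) := by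
      have := hz p; simp [he, Ne.symm hjp] at this; linarith
    rcases hd with hd | hd
    · have := hd p
      have : (0:ℝ) ≤ (d p : ℝ) := by exact_mod_cast this
      rw [hdp] at this
      have : (N:ℝ) ≤ 0 := by linarith
      have : N ≤ 0 := by exact_mod_cast this
      omega
    · have := hd j
      have : (d j : ℝ) ≤ 0 := by exact_mod_cast this
      rw [hdj] at this; linarith
  have hNlt : N ≤ -1 := by
    have : N ≠ 0 := fun h => hNne (by rw [h]; simp)
    omega
  -- M := pairing with θS
  obtain ⟨M, hM⟩ := hcrys (α p) (hα p) θS hθS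
  have hMc : (M:ℝ) = (c j : ℝ) * (N : ℝ) := by
    rw [← hM, ← hN, hc, inner_sum]
    rw [Finset.sum_eq_single j]
    · rw [real_inner_smul_right]
    · intro i hiS hij
      rw [real_inner_smul_right, hcoroot, honly i hiS hij, mul_zero, mul_zero]
    · intro h; exact absurd hj h
  have hMZ : M = (c j : ℤ) * N := by exact_mod_cast hMc
  have hcj1 : 1 ≤ (c j : ℤ) := by
    have := hsupp j hj; omega
  have hMle : M ≤ -1 := by nlinarith
  -- M ≥ -1
  have hMge : -1 ≤ M := by
    by_contra hlt
    push_neg at hlt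
    have hM2 : (M:ℝ) ≤ -2 := by exact_mod_cast (by omega : M ≤ -2)
    have hip : ⟪α p, θS⟫ = (M:ℝ) * ⟪α p, α p⟫ / 2 := by
      have h := hM
      rw [hcoroot, div_mul_eq_mul_div, div_eq_iff hpp.ne'] at h
      rw [eq_div_iff (two_ne_zero)]
      linarith
    have hnn : ⟪θS + α p, θS + α p⟫ ≤ 0 := by
      have hl := hlong θS hθS
      have h1 : ⟪θS + α p, θS + α p⟫
          = ⟪θS, θS⟫ + 2 * ⟪α p, θS⟫ + ⟪α p, α p⟫ := by
        rw [real_inner_add_add_self, real_inner_comm θS (α p)]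
      nlinarith
    have hz : θS + α p = 0 := real_inner_self_nonpos.mp hnn
    -- contradiction with linear independence
    set g : Fin n → ℝ := fun i => (if i ∈ S then (c i : ℝ) else 0) + (if i = p then 1 else 0)
      with hg
    have hgz : ∀ i, g i = 0 := by
      apply hli
      have h1 : ∀ i, g i • α i
          = (if i ∈ S then (c i : ℝ) • α i else 0) + (if i = p then α i else 0) := by
        intro i
        by_cases h1 : i ∈ S
        · have h2 : i ≠ p := fun h => hpS (h ▸ h1)
          simp [hg, h1, h2]
        · by_cases h2 : i = p
          · subst h2
            simp [hg, hpS]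
          · simp [hg, h1, h2]
      rw [Finset.sum_congr rfl (fun i _ => h1 i), Finset.sum_add_distrib]
      simp only [Finset.sum_ite_mem, Finset.univ_inter, Finset.sum_ite_eq',
        Finset.mem_univ, if_true]
      rw [← hc]
      exact hz
    have := hgz p
    simp [hg, hpS] at this
  have hMeq : M = -1 := le_antisymm hMle hMge
  constructor
  · rw [hM, hMeq]; norm_num
  · have h1 : (c j : ℤ) * N = -1 := by omega
    have h2 : (c j : ℤ) ≤ 1 := by
      nlinarith [mul_nonneg (by linarith : (0:ℤ) ≤ (c j:ℤ) - 1) (by linarith : (0:ℤ) ≤ -N - 1)]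
    have : (c j : ℤ) = 1 := le_antisymm h2 hcj1
    exact_mod_cast this
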